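/- arXiv:1803.01819 — 2 statements merged into one kernel-verified Lean document; each statement's English description precedes it below -/
import Mathlib

section
/- Let N, K, L, P be natural numbers with 2L ≤ K ≤ N and P ≥ 1, and let A be the K × N complex matrix with entries A_{k,n} = exp(−2πi k n / N) for 0 ≤ k ≤ K−1, 0 ≤ n ≤ N−1. If X, Y ∈ ℂ^{N×P} are matrices each having at most L nonzero entries in total, and A·X = A·Y, then X = Y. That is, in the noiseless on-grid setting, a target scene with L targets (encoded as an N × P matrix with L nonzero entries, one per target at its delay-Doppler grid index) is uniquely determined by K ≥ 2L Fourier coefficients per pulse. -/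
/-!
Column by column, `A (X - Y) = 0` says that the first `K` power sums `∑ₙ dₙ zₙ ^ k` of the column
`d` of `X - Y` vanish, where the nodes `zₙ = exp (-2πi n / N)` are distinct `N`-th roots of unity.
That column has at most `2L ≤ K` nonzero entries, and a square Vandermonde system on distinct
nodes only has the trivial solution, so `d = 0`.
-/

open Real Finset

section Vandermonde

variable {R ι : Type*} [CommRing R] [IsDomain R] [Fintype ι]

theorem Matrix.eq_zero_of_forall_lt_card_sum_mul_pow_eq_zero {z v : ι → R}
    (hz : Function.Injective z) (hv : ∀ k < Fintype.card ι, ∑ i, v i * z i ^ k = 0) :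
    v = 0 := by
  let e := Fintype.equivFin ι
  have hv' : v ∘ e.symm = 0 :=
    Matrix.eq_zero_of_forall_pow_sum_mul_pow_eq_zero (hz.comp e.symm.injective) fun k => by
      simpa only [Function.comp_apply, e.symm.sum_comp (fun i => v i * z i ^ (k : ℕ))]
        using hv k k.2
  funext i
  simpa using congrFun hv' (e i)

theorem Matrix.eq_zero_of_card_support_le_of_sum_mul_pow_eq_zero [DecidableEq R]
    {z v : ι → R} {K : ℕ} (hz : Function.Injective z) (hvK : #{i | v i ≠ 0} ≤ K)
    (hv : ∀ k < K, ∑ i, v i * z i ^ k = 0) : v = 0 := by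
  set S : Finset ι := {i | v i ≠ 0}
  have hvS : (fun i : S => v i) = 0 := by
    refine Matrix.eq_zero_of_forall_lt_card_sum_mul_pow_eq_zero (z := fun i : S => z i)
      (hz.comp Subtype.val_injective) fun k hk => ?_
    rw [Finset.sum_coe_sort S (fun i => v i * z i ^ k),
      Finset.sum_subset (subset_univ S) fun i _ hi => ?_]
    · exact hv k (hk.trans_le ((Fintype.card_coe S).trans_le hvK))
    · simp only [S, mem_filter, mem_univ, true_and, not_not] at hi
      rw [hi, zero_mul]
  funext i
  by_contra hi
  exact hi (congrFun hvS ⟨i, by simpa [S] using hi⟩)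

end Vandermonde

section Support

variable {R : Type*} [AddGroup R] [DecidableEq R]

theorem Finset.card_filter_sub_ne_zero_le {ι : Type*} [Fintype ι] [DecidableEq ι]
    (f g : ι → R) :
    #{i | f i - g i ≠ 0} ≤ #{i | f i ≠ 0} + #{i | g i ≠ 0} := by
  refine (card_le_card fun i hi => ?_).trans (card_union_le _ _)
  simp only [mem_filter, mem_univ, true_and, mem_union] at hi ⊢
  by_contra! h
  exact hi (by rw [h.1, h.2, sub_zero])

theorem Matrix.card_col_support_le {m n : Type*} [Fintype m] [Fintype n] (X : Matrix m n R)
    (p : n) : #{i | X i p ≠ 0} ≤ #{q : m × n | X q.1 q.2 ≠ 0} :=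
  card_le_card_of_injOn (fun i => (i, p)) (fun i hi => by simpa using hi)
    fun _ _ _ _ h => (Prod.mk.inj h).1

end Support

noncomputable def dftNode (N : ℕ) (n : Fin N) : ℂ :=
  Complex.exp (-2 * π * Complex.I * (n : ℕ) / N)

theorem dftNode_injective (N : ℕ) : Function.Injective (dftNode N) := by
  rcases N.eq_zero_or_pos with rfl | hN
  · exact fun n => n.elim0
  have hζ := (Complex.isPrimitiveRoot_exp N hN.ne').inv
  have hpow (n : Fin N) : dftNode N n = (Complex.exp (2 * π * Complex.I / N))⁻¹ ^ (n : ℕ) := by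
    rw [dftNode, ← Complex.exp_neg, ← Complex.exp_nat_mul]
    ring_nf
  intro n m h
  rw [hpow, hpow] at h
  exact Fin.ext (hζ.pow_inj n.2 m.2 h)

theorem exp_dft_eq_dftNode_pow {N : ℕ} (k : ℕ) (n : Fin N) :
    Complex.exp (-2 * (π : ℂ) * Complex.I * (k : ℂ) * ((n : ℕ) : ℂ) / (N : ℂ)) =
      dftNode N n ^ k := by
  rw [dftNode, ← Complex.exp_nat_mul]
  ring_nf

theorem partial_dft_sparse_matrix_uniqueness_general
    (N K L P : ℕ) (hKL : 2 * L ≤ K)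
    (A : Matrix (Fin K) (Fin N) ℂ)
    (hA : ∀ (k : Fin K) (n : Fin N),
      A k n = Complex.exp (-2 * (π : ℂ) * Complex.I * ((k : ℕ) : ℂ) * ((n : ℕ) : ℂ) / (N : ℂ)))
    (X Y : Matrix (Fin N) (Fin P) ℂ)
    (hX : (Finset.univ.filter fun q : Fin N × Fin P => X q.1 q.2 ≠ 0).card ≤ L)
    (hY : (Finset.univ.filter fun q : Fin N × Fin P => Y q.1 q.2 ≠ 0).card ≤ L)
    (hXY : A * X = A * Y) :
    X = Y := by
  ext n p
  have hsupp : #{i | X i p - Y i p ≠ 0} ≤ K :=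
    calc #{i | X i p - Y i p ≠ 0} ≤ #{i | X i p ≠ 0} + #{i | Y i p ≠ 0} :=
          card_filter_sub_ne_zero_le _ _
      _ ≤ L + L := add_le_add ((X.card_col_support_le p).trans hX)
          ((Y.card_col_support_le p).trans hY)
      _ ≤ K := by omega
  have hsums (k : ℕ) (hk : k < K) : ∑ i, (X i p - Y i p) * dftNode N i ^ k = 0 := by
    have h : (A * (X - Y)) ⟨k, hk⟩ p = 0 := by
      rw [Matrix.mul_sub, hXY, sub_self, Matrix.zero_apply]
    simp only [Matrix.mul_apply, hA, exp_dft_eq_dftNode_pow, Matrix.sub_apply] at h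
    simpa only [mul_comm] using h
  have hcol := Matrix.eq_zero_of_card_support_le_of_sum_mul_pow_eq_zero
    (dftNode_injective N) hsupp hsums
  exact sub_eq_zero.mp (congrFun hcol n)

/-- A target scene encoded as an `N × P` matrix with at most `L` nonzero entries is uniquely
determined by `K ≥ 2L` consecutive discrete Fourier coefficients per pulse. -/
theorem partial_dft_sparse_matrix_uniqueness
    (N K L P : ℕ) (hKL : 2 * L ≤ K) (hKN : K ≤ N) (hP : 1 ≤ P)
    (A : Matrix (Fin K) (Fin N) ℂ)
    (hA : ∀ (k : Fin K) (n : Fin N),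
      A k n = Complex.exp (-2 * (π : ℂ) * Complex.I * ((k : ℕ) : ℂ) * ((n : ℕ) : ℂ) / (N : ℂ)))
    (X Y : Matrix (Fin N) (Fin P) ℂ)
    (hX : (Finset.univ.filter fun q : Fin N × Fin P => X q.1 q.2 ≠ 0).card ≤ L)
    (hY : (Finset.univ.filter fun q : Fin N × Fin P => Y q.1 q.2 ≠ 0).card ≤ L)
    (hXY : A * X = A * Y) :
    X = Y :=
  partial_dft_sparse_matrix_uniqueness_general N K L P hKL A hA X Y hX hY hXY
end

section
/- Let N, K, P₁, P₂, L be natural numbers with 2L ≤ K ≤ N and 2L ≤ P₂ ≤ P₁. Let A be the K × N complex matrix with entries A_{k,n} = exp(−2πi k n / N) for 0 ≤ k ≤ K−1, 0 ≤ n ≤ N−1, and let B be the P₂ × P₁ complex matrix with entries B_{p,m} = exp(−2πi p m / P₁) for 0 ≤ p ≤ P₂−1, 0 ≤ m ≤ P₁−1 (consecutive rows of the respective DFT matrices). If X, Y ∈ ℂ^{N×P₁} are matrices each having at most L nonzero entries in total, and A·X·Bᵀ = A·Y·Bᵀ, then X = Y. -/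
/-!
Put `Z = X - Y`, which has at most `2L` nonzero entries. Each column of `Z Bᵀ` then has at most
`2L ≤ K` nonzero entries and is annihilated by `A`, and each row of `Z` has at most `2L ≤ P₂`
nonzero entries and is annihilated by `B`. Both steps rest on one fact: `K` consecutive rows of a
DFT matrix form a Vandermonde matrix whose nodes are distinct roots of unity, so on the support of
a vector with at most `K` nonzero entries they contain an invertible square Vandermonde matrix.
-/

open Real Finset
open scoped Matrix

namespace Matrix

variable {R : Type*} [DecidableEq R]

theorem card_filter_sub_ne_zero_le [AddGroup R] {m n : Type*} [Fintype m] [Fintype n]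
    (X Y : Matrix m n R) :
    #{q : m × n | (X - Y) q.1 q.2 ≠ 0} ≤
      #{q : m × n | X q.1 q.2 ≠ 0} + #{q : m × n | Y q.1 q.2 ≠ 0} := by
  classical
  calc #{q : m × n | (X - Y) q.1 q.2 ≠ 0}
      ≤ #{q : m × n | X q.1 q.2 ≠ 0 ∨ Y q.1 q.2 ≠ 0} :=
        card_le_card <| monotone_filter_right _ fun q _ hq => not_and_or.mp fun ⟨hX, hY⟩ =>
          hq (by rw [sub_apply, hX, hY, sub_zero])
    _ ≤ _ := by rw [filter_or]; exact card_union_le _ _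

theorem card_row_ne_zero_le [Zero R] {m n : Type*} [Fintype m] [Fintype n]
    (M : Matrix m n R) (i : m) :
    #{j | M i j ≠ 0} ≤ #{q : m × n | M q.1 q.2 ≠ 0} :=
  card_le_card_of_injOn (fun j => (i, j)) (fun _ hj => by simpa using hj)
    fun _ _ _ _ h => congrArg Prod.snd h

theorem card_col_mul_ne_zero_le [NonUnitalNonAssocSemiring R] {l m n : Type*}
    [Fintype l] [Fintype m] (M : Matrix l m R) (M' : Matrix m n R) (j : n) :
    #{i | (M * M') i j ≠ 0} ≤ #{q : l × m | M q.1 q.2 ≠ 0} := by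
  classical
  refine (card_le_card fun i hi => ?_).trans (card_image_le (f := Prod.fst))
  obtain ⟨k, -, hk⟩ := exists_ne_zero_of_sum_ne_zero (mem_filter.mp hi).2
  exact mem_image.mpr ⟨(i, k), by simpa using left_ne_zero_of_mul hk, rfl⟩

end Matrix

theorem eq_zero_of_forall_sum_mul_pow_eq_zero_of_card_ne_zero_le {ι R : Type*} [Fintype ι]
    [CommRing R] [IsDomain R] [DecidableEq R] {x v : ι → R} {K : ℕ}
    (hx : Function.Injective x) (hv : #{i | v i ≠ 0} ≤ K)
    (h : ∀ k < K, ∑ i, v i * x i ^ k = 0) : v = 0 := by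
  set S : Finset ι := {i | v i ≠ 0} with hS
  let e : Fin #S ≃ S := S.equivFin.symm
  have hvS : (fun j => v (e j)) = 0 := by
    refine Matrix.eq_zero_of_forall_pow_sum_mul_pow_eq_zero
      (f := fun j => x (e j)) (hx.comp (Subtype.val_injective.comp e.injective)) fun k => ?_
    rw [e.sum_comp (fun i : S => v i * x i ^ (k : ℕ)),
      S.sum_coe_sort (fun i => v i * x i ^ (k : ℕ)), sum_filter_of_ne fun i _ hi => left_ne_zero_of_mul hi]
    exact h k (k.2.trans_le hv)
  ext i
  by_contra hi
  exact hi (by simpa [e] using congrFun hvS (e.symm ⟨i, by simpa [hS] using hi⟩))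

noncomputable def partialDFT (K N : ℕ) : Matrix (Fin K) (Fin N) ℂ :=
  Matrix.of fun k n => Complex.exp (-2 * π * Complex.I * (k : ℕ) * (n : ℕ) / N)

theorem partialDFT_apply_eq_pow (K N : ℕ) (k : Fin K) (n : Fin N) :
    partialDFT K N k n = (Complex.exp (-2 * π * Complex.I / N) ^ (n : ℕ)) ^ (k : ℕ) := by
  rw [partialDFT, Matrix.of_apply, ← Complex.exp_nat_mul, ← Complex.exp_nat_mul]
  ring_nf

theorem injective_pow_exp_neg_two_pi_I_div (N : ℕ) :
    Function.Injective fun n : Fin N => Complex.exp (-2 * π * Complex.I / N) ^ (n : ℕ) := by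
  intro a b hab
  have hζ : IsPrimitiveRoot (Complex.exp (-2 * π * Complex.I / N)) N := by
    simpa [← Complex.exp_neg, neg_div] using (Complex.isPrimitiveRoot_exp N a.pos.ne').inv
  exact Fin.ext (hζ.pow_inj a.2 b.2 hab)

theorem eq_zero_of_partialDFT_mul_eq_zero {K N : ℕ} {ι : Type*} {W : Matrix (Fin N) ι ℂ}
    (hW : ∀ j, #{n | W n j ≠ 0} ≤ K) (h : partialDFT K N * W = 0) : W = 0 := by
  ext n j
  suffices (fun n => W n j) = 0 from congrFun this n
  refine eq_zero_of_forall_sum_mul_pow_eq_zero_of_card_ne_zero_le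
    (injective_pow_exp_neg_two_pi_I_div N) (hW j) fun k hk => ?_
  simpa [Matrix.mul_apply, partialDFT_apply_eq_pow, mul_comm] using
    congrFun (congrFun h ⟨k, hk⟩) j

theorem partial_dft_doppler_sparse_uniqueness_general
    (N K P₁ P₂ L : ℕ) (hKL : 2 * L ≤ K) (hPL : 2 * L ≤ P₂)
    (A : Matrix (Fin K) (Fin N) ℂ)
    (hA : ∀ (k : Fin K) (n : Fin N),
      A k n = Complex.exp (-2 * (π : ℂ) * Complex.I * ((k : ℕ) : ℂ) * ((n : ℕ) : ℂ) / (N : ℂ)))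
    (B : Matrix (Fin P₂) (Fin P₁) ℂ)
    (hB : ∀ (p : Fin P₂) (m : Fin P₁),
      B p m = Complex.exp (-2 * (π : ℂ) * Complex.I * ((p : ℕ) : ℂ) * ((m : ℕ) : ℂ) / (P₁ : ℂ)))
    (X Y : Matrix (Fin N) (Fin P₁) ℂ)
    (hX : (Finset.univ.filter fun q : Fin N × Fin P₁ => X q.1 q.2 ≠ 0).card ≤ L)
    (hY : (Finset.univ.filter fun q : Fin N × Fin P₁ => Y q.1 q.2 ≠ 0).card ≤ L)
    (hXY : A * X * B.transpose = A * Y * B.transpose) :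
    X = Y := by
  obtain rfl : A = partialDFT K N := Matrix.ext hA
  obtain rfl : B = partialDFT P₂ P₁ := Matrix.ext hB
  set Z := X - Y
  have hZ : #{q : Fin N × Fin P₁ | Z q.1 q.2 ≠ 0} ≤ 2 * L :=
    (Matrix.card_filter_sub_ne_zero_le X Y).trans (by omega)
  have hZB : Z * (partialDFT P₂ P₁)ᵀ = 0 := by
    refine eq_zero_of_partialDFT_mul_eq_zero (K := K) (fun p => ?_) ?_
    · exact (Matrix.card_col_mul_ne_zero_le Z _ p).trans (hZ.trans hKL)
    · rw [← Matrix.mul_assoc, Matrix.mul_sub, Matrix.sub_mul, hXY, sub_self]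
  have hZT : Zᵀ = 0 := by
    refine eq_zero_of_partialDFT_mul_eq_zero (K := P₂) (fun n => ?_) ?_
    · exact (Matrix.card_row_ne_zero_le Z n).trans (hZ.trans hPL)
    · rw [← Matrix.transpose_transpose (partialDFT P₂ P₁), ← Matrix.transpose_mul, hZB,
        Matrix.transpose_zero]
  exact sub_eq_zero.mp (Matrix.transpose_eq_zero.mp hZT)

/-- Joint temporal–Doppler sub-Nyquist uniqueness: a target scene with at most `L` nonzero
entries is uniquely determined by `K ≥ 2L` Fourier coefficients per pulse and `P₂ ≥ 2L`
(consecutive) transmitted pulses, both sensing matrices being partial DFT matrices. -/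
theorem partial_dft_doppler_sparse_uniqueness
    (N K P₁ P₂ L : ℕ) (hKL : 2 * L ≤ K) (hKN : K ≤ N) (hPL : 2 * L ≤ P₂) (hPP : P₂ ≤ P₁)
    (A : Matrix (Fin K) (Fin N) ℂ)
    (hA : ∀ (k : Fin K) (n : Fin N),
      A k n = Complex.exp (-2 * (π : ℂ) * Complex.I * ((k : ℕ) : ℂ) * ((n : ℕ) : ℂ) / (N : ℂ)))
    (B : Matrix (Fin P₂) (Fin P₁) ℂ)
    (hB : ∀ (p : Fin P₂) (m : Fin P₁),
      B p m = Complex.exp (-2 * (π : ℂ) * Complex.I * ((p : ℕ) : ℂ) * ((m : ℕ) : ℂ) / (P₁ : ℂ)))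
    (X Y : Matrix (Fin N) (Fin P₁) ℂ)
    (hX : (Finset.univ.filter fun q : Fin N × Fin P₁ => X q.1 q.2 ≠ 0).card ≤ L)
    (hY : (Finset.univ.filter fun q : Fin N × Fin P₁ => Y q.1 q.2 ≠ 0).card ≤ L)
    (hXY : A * X * B.transpose = A * Y * B.transpose) :
    X = Y :=
  partial_dft_doppler_sparse_uniqueness_general N K P₁ P₂ L hKL hPL A hA B hB X Y hX hY hXY
end
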